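/- arXiv:1403.3385 — 5 statements merged into one kernel-verified Lean document; each statement's English description precedes it below -/
import Mathlib

section
/- For any words u and a = a₁…aₙ over Σ and any letter σ, the identity u σ a = Σ_{i=0}^n [u ⧢ (−aᵢ)…(−a₁)] σ ⧢ a_{i+1}…aₙ holds in the shuffle algebra T(Σ), where (−aᵢ)…(−a₁) denotes the reversed word with sign (−1)^i. -/
noncomputable def shuffle {α : Type*} : List α → List α → (List α →₀ ℚ)
  | [], w => Finsupp.single w 1
  | a :: u, [] => Finsupp.single (a :: u) 1
  | a :: u, b :: v =>
      Finsupp.mapDomain (List.cons a) (shuffle u (b :: v)) +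
      Finsupp.mapDomain (List.cons b) (shuffle (a :: u) v)

noncomputable def shuffleExt {α : Type*} (x y : List α →₀ ℚ) : List α →₀ ℚ :=
  x.sum fun u cu => y.sum fun v cv => (cu * cv) • shuffle u v

/-!
Induct on `a` from the right. For `a = t x`, the last-letter recursion
`(w σ) ⧢ (q x) = ((w σ) ⧢ q) x + (w ⧢ q x) σ` splits each summand with `i ≤ |t|` into a part
ending in `x`, which sums to `(u σ t) x` by induction, and a part ending in `σ`. By associativity
these `σ`-parts, together with the summand `i = |a|`, add up to
`(u ⧢ ∑ᵢ (-1)ⁱ rev(a₁⋯aᵢ) ⧢ aᵢ₊₁⋯aₙ) σ`. This alternating sum vanishes for nonempty `a` (the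
antipode identity of the shuffle Hopf algebra): consecutive summands cancel on the words
starting with `aᵢ₊₁`.
-/

section

open Finsupp

variable {α : Type*}

@[simp] theorem shuffle_nil_left (v : List α) : shuffle [] v = single v 1 := by
  rw [shuffle]

@[simp] theorem shuffle_nil_right (u : List α) : shuffle u [] = single u 1 := by
  cases u <;> rw [shuffle]

theorem shuffle_cons_cons (a b : α) (u v : List α) :
    shuffle (a :: u) (b :: v) =
      mapDomain (List.cons a) (shuffle u (b :: v)) +
        mapDomain (List.cons b) (shuffle (a :: u) v) := by
  rw [shuffle]

theorem mapDomain_cons_mapDomain_append (a x : α) (X : List α →₀ ℚ) :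
    mapDomain (List.cons a) (mapDomain (· ++ [x]) X) =
      mapDomain (· ++ [x]) (mapDomain (List.cons a) X) := by
  simp only [← mapDomain_comp]
  rfl

theorem shuffle_append_singleton_append_singleton (p q : List α) (c d : α) :
    shuffle (p ++ [c]) (q ++ [d]) =
      mapDomain (· ++ [d]) (shuffle (p ++ [c]) q) +
        mapDomain (· ++ [c]) (shuffle p (q ++ [d])) := by
  match p, q with
  | [], [] => simp [shuffle_cons_cons]
  | [], b :: q =>
    have ih := shuffle_append_singleton_append_singleton [] q c d
    simp only [List.nil_append, List.cons_append] at ih ⊢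
    simp [shuffle_cons_cons, ih, mapDomain_add, mapDomain_cons_mapDomain_append]
    abel
  | a :: p, [] =>
    have ih := shuffle_append_singleton_append_singleton p [] c d
    simp only [List.nil_append, List.cons_append] at ih ⊢
    simp [shuffle_cons_cons, ih, mapDomain_add, mapDomain_cons_mapDomain_append]
    abel
  | a :: p, b :: q =>
    have ih₁ := shuffle_append_singleton_append_singleton p (b :: q) c d
    have ih₂ := shuffle_append_singleton_append_singleton (a :: p) q c d
    simp only [List.cons_append] at ih₁ ih₂ ⊢
    rw [shuffle_cons_cons, ih₁, ih₂, shuffle_cons_cons a b (p ++ [c]) q,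
      shuffle_cons_cons a b p (q ++ [d])]
    simp only [mapDomain_add, mapDomain_cons_mapDomain_append]
    abel
termination_by p.length + q.length

noncomputable def shuffleₗ : (List α →₀ ℚ) →ₗ[ℚ] (List α →₀ ℚ) →ₗ[ℚ] List α →₀ ℚ :=
  linearCombination ℚ fun u => linearCombination ℚ (shuffle u)

theorem shuffleExt_eq_shuffleₗ (x y : List α →₀ ℚ) : shuffleExt x y = shuffleₗ x y := by
  simp [shuffleExt, shuffleₗ, linearCombination_apply, Finsupp.smul_sum, mul_smul]

@[simp] theorem shuffleₗ_single_single (u v : List α) (r s : ℚ) :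
    shuffleₗ (single u r) (single v s) = (r * s) • shuffle u v := by
  simp [shuffleₗ, mul_smul]

@[simp] theorem shuffleₗ_single_nil_left (Y : List α →₀ ℚ) : shuffleₗ (single [] 1) Y = Y := by
  induction Y using Finsupp.induction_linear with
  | zero => simp
  | add X Y hX hY => rw [map_add, hX, hY]
  | single p r => simp

@[simp] theorem shuffleₗ_single_nil_right (X : List α →₀ ℚ) : shuffleₗ X (single [] 1) = X := by
  induction X using Finsupp.induction_linear with
  | zero => simp
  | add X Y hX hY => rw [map_add, LinearMap.add_apply, hX, hY]
  | single p r => simp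

theorem shuffleₗ_mapDomain_cons_single_cons (a c : α) (X : List α →₀ ℚ) (w : List α) :
    shuffleₗ (mapDomain (List.cons a) X) (single (c :: w) 1) =
      mapDomain (List.cons a) (shuffleₗ X (single (c :: w) 1)) +
        mapDomain (List.cons c) (shuffleₗ (mapDomain (List.cons a) X) (single w 1)) := by
  induction X using Finsupp.induction_linear with
  | zero => simp
  | add X Y hX hY => simp only [mapDomain_add, map_add, LinearMap.add_apply, hX, hY]; abel
  | single p r => simp [shuffle_cons_cons, mapDomain_smul]

theorem shuffleₗ_single_cons_mapDomain_cons (a c : α) (u : List α) (Y : List α →₀ ℚ) :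
    shuffleₗ (single (a :: u) 1) (mapDomain (List.cons c) Y) =
      mapDomain (List.cons a) (shuffleₗ (single u 1) (mapDomain (List.cons c) Y)) +
        mapDomain (List.cons c) (shuffleₗ (single (a :: u) 1) Y) := by
  induction Y using Finsupp.induction_linear with
  | zero => simp
  | add X Y hX hY => simp only [mapDomain_add, map_add, hX, hY]; abel
  | single p r => simp [shuffle_cons_cons, mapDomain_smul]

theorem shuffleₗ_mapDomain_append_single_append (σ x : α) (X : List α →₀ ℚ) (q : List α) :
    shuffleₗ (mapDomain (· ++ [σ]) X) (single (q ++ [x]) 1) =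
      mapDomain (· ++ [x]) (shuffleₗ (mapDomain (· ++ [σ]) X) (single q 1)) +
        mapDomain (· ++ [σ]) (shuffleₗ X (single (q ++ [x]) 1)) := by
  induction X using Finsupp.induction_linear with
  | zero => simp
  | add X Y hX hY => simp only [mapDomain_add, map_add, LinearMap.add_apply, hX, hY]; abel
  | single p r => simp [shuffle_append_singleton_append_singleton, mapDomain_smul]

theorem shuffle_assoc (u v w : List α) :
    shuffleₗ (shuffle u v) (single w 1) = shuffleₗ (single u 1) (shuffle v w) := by
  match u, v, w with
  | [], v, w => simp
  | a :: u, [], w => simp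
  | a :: u, b :: v, [] => simp
  | a :: u, b :: v, c :: w =>
    have ih₁ := shuffle_assoc u (b :: v) (c :: w)
    have ih₂ := shuffle_assoc (a :: u) v (c :: w)
    have ih₃ := shuffle_assoc (a :: u) (b :: v) w
    rw [shuffle_cons_cons b c v w, map_add] at ih₁
    rw [shuffle_cons_cons a b u v, map_add, LinearMap.add_apply] at ih₃
    rw [shuffle_cons_cons a b u v, map_add, LinearMap.add_apply,
      shuffleₗ_mapDomain_cons_single_cons, shuffleₗ_mapDomain_cons_single_cons, ih₁, ih₂,
      add_add_add_comm, ← mapDomain_add, ih₃, shuffle_cons_cons b c v w, map_add,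
      shuffleₗ_single_cons_mapDomain_cons, shuffleₗ_single_cons_mapDomain_cons]
    simp only [mapDomain_add]
    abel
termination_by u.length + v.length + w.length

noncomputable def antipodeSum (a : List α) : List α →₀ ℚ :=
  ∑ i ∈ Finset.range (a.length + 1), (-1 : ℚ) ^ i • shuffle (a.take i).reverse (a.drop i)

/-- The identity `antipodeSum_eq_zero`, generalized so that it can be proved by induction on `q`. -/
theorem sum_neg_one_pow_smul_shuffle_reverse_take_append_cons (q p : List α) (a : α) :
    ∑ i ∈ Finset.range (q.length + 1),
      (-1 : ℚ) ^ i • shuffle ((q.take i).reverse ++ a :: p) (q.drop i) =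
    mapDomain (List.cons a) (shuffle p q) := by
  induction q generalizing a p with
  | nil => simp [mapDomain_single]
  | cons b q ih =>
    rw [List.length_cons, Finset.sum_range_succ']
    simp only [List.take_succ_cons, List.drop_succ_cons, List.reverse_cons, List.append_assoc,
      List.singleton_append, pow_succ, mul_neg_one, neg_smul, Finset.sum_neg_distrib, ih]
    simp [shuffle_cons_cons]

theorem antipodeSum_eq_zero {a : List α} (ha : a ≠ []) : antipodeSum a = 0 := by
  obtain ⟨b, q, rfl⟩ := List.exists_cons_of_ne_nil ha
  have h := sum_neg_one_pow_smul_shuffle_reverse_take_append_cons q [] b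
  rw [antipodeSum, List.length_cons, Finset.sum_range_succ']
  simp only [List.take_succ_cons, List.drop_succ_cons, List.reverse_cons, pow_succ, mul_neg_one,
    neg_smul, Finset.sum_neg_distrib, h]
  simp [mapDomain_single]

noncomputable def tailSum (u : List α) (σ : α) (a : List α) : List α →₀ ℚ :=
  ∑ i ∈ Finset.range (a.length + 1),
    (-1 : ℚ) ^ i •
      shuffleₗ (mapDomain (· ++ [σ]) (shuffle u (a.take i).reverse)) (single (a.drop i) 1)

theorem tailSum_append_singleton (u t : List α) (σ x : α) :
    tailSum u σ (t ++ [x]) =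
      mapDomain (· ++ [x]) (tailSum u σ t) +
        mapDomain (· ++ [σ]) (shuffleₗ (single u 1) (antipodeSum (t ++ [x]))) := by
  set a := t ++ [x]
  have hlen : a.length = t.length + 1 := by simp [a]
  have hsplit (i : ℕ) (hi : i ≤ t.length) :
      (-1 : ℚ) ^ i • shuffleₗ (mapDomain (· ++ [σ]) (shuffle u (a.take i).reverse))
          (single (a.drop i) 1) =
        mapDomain (· ++ [x]) ((-1 : ℚ) ^ i •
          shuffleₗ (mapDomain (· ++ [σ]) (shuffle u (t.take i).reverse)) (single (t.drop i) 1)) +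
        mapDomain (· ++ [σ])
          (shuffleₗ (single u 1) ((-1 : ℚ) ^ i • shuffle (a.take i).reverse (a.drop i))) := by
    simp only [a, List.take_append_of_le_length hi, List.drop_append_of_le_length hi,
      shuffleₗ_mapDomain_append_single_append, shuffle_assoc, smul_add, map_smul, mapDomain_smul]
  have hlast :
      (-1 : ℚ) ^ (t.length + 1) • shuffleₗ
          (mapDomain (· ++ [σ]) (shuffle u (a.take (t.length + 1)).reverse))
          (single (a.drop (t.length + 1)) 1) =
        mapDomain (· ++ [σ]) (shuffleₗ (single u 1) ((-1 : ℚ) ^ (t.length + 1) •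
          shuffle (a.take (t.length + 1)).reverse (a.drop (t.length + 1)))) := by
    simp [← hlen, mapDomain_smul]
  rw [tailSum, tailSum, antipodeSum, hlen, Finset.sum_range_succ, hlast,
    Finset.sum_congr rfl fun i hi => hsplit i (Finset.mem_range_succ_iff.mp hi),
    Finset.sum_add_distrib, Finset.sum_range_succ _ (t.length + 1), map_add, map_sum,
    mapDomain_add, mapDomain_finsetSum, mapDomain_finsetSum, add_assoc]

end

/-- Lemma (shuffle tail decomposition):
`u σ a = ∑_{i=0}^n [u ⧢ (−aᵢ)⋯(−a₁)] σ ⧢ a_{i+1}⋯aₙ`, where `(−aᵢ)⋯(−a₁)` denotes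
`(−1)^i` times the reversal of the length-`i` prefix of `a`. -/
theorem shuffle_tail_decomposition {α : Type*} (u a : List α) (σ : α) :
    Finsupp.single (u ++ σ :: a) (1 : ℚ) =
    ∑ i ∈ Finset.range (a.length + 1),
      ((-1 : ℚ) ^ i) •
        shuffleExt
          (Finsupp.mapDomain (fun w => w ++ [σ]) (shuffle u ((a.take i).reverse)))
          (Finsupp.single (a.drop i) 1) := by
  simp only [shuffleExt_eq_shuffleₗ]
  change _ = tailSum u σ a
  induction a using List.reverseRecOn with
  | nil => simp [tailSum, Finsupp.mapDomain_single]
  | append_singleton t x ih =>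
    rw [tailSum_append_singleton, antipodeSum_eq_zero (by simp), ← ih]
    simp [Finsupp.mapDomain_single]
end

section
/- For every n ≥ 1, Reg_∞ annihilates the word consisting of n copies of the letter −1: Reg_∞((e_{−1})ⁿ) = 0. -/
/-- The regularization map `Reg_∞`: on a word `w = σ₁…σₙ`,
`Reg_∞(w) = ∑_{k=1}^n (σₖ − e_m)[(−e_m)^{k−1} ⧢ σ_{k+1}…σₙ]`, where `m` plays the
role of the letter `−1` and `(−e_m)^{k−1}` is `(−1)^{k−1}` times the word of
`k−1` copies of `m`. -/
noncomputable def regInf {α : Type*} (m : α) (w : List α) : List α →₀ ℚ :=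
  ∑ k ∈ Finset.range w.length,
    ((-1 : ℚ) ^ k) •
      (Finsupp.mapDomain (List.cons (w.getD k m))
          (shuffle (List.replicate k m) (w.drop (k + 1))) -
       Finsupp.mapDomain (List.cons m)
          (shuffle (List.replicate k m) (w.drop (k + 1))))

/-- Every summand of `Reg_∞(w)` carries the factor `σₖ − e_m`, which vanishes when `σₖ = m`. -/
theorem regInf_eq_zero_of_forall_mem_eq {α : Type*} (m : α) (w : List α)
    (hw : ∀ a ∈ w, a = m) : regInf m w = 0 := by
  refine Finset.sum_eq_zero fun k hk => ?_
  have hkm : w.getD k m = m := by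
    rw [List.getD_eq_getElem _ _ (Finset.mem_range.mp hk)]
    exact hw _ (List.getElem_mem _)
  rw [hkm, sub_self, smul_zero]

theorem regInf_replicate_eq_zero_general {α : Type*} (m : α) (n : ℕ) :
    regInf m (List.replicate n m) = 0 :=
  regInf_eq_zero_of_forall_mem_eq m _ fun _ => List.eq_of_mem_replicate

/-- `Reg_∞` annihilates the word of `n ≥ 1` copies of the letter `−1` (here `m`). -/
theorem regInf_replicate_eq_zero {α : Type*} (m : α) (n : ℕ) (hn : 1 ≤ n) :
    regInf m (List.replicate n m) = 0 :=
  regInf_replicate_eq_zero_general m n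
end

section
/- The five-term relation for the dilogarithm: for x, y ∈ (0,1), Li₂(xy/((1−x)(1−y))) − Li₂(x/(1−y)) − Li₂(y/(1−x)) = −Li₂(x) − Li₂(y) − log(1−x)log(1−y), provided xy/((1−x)(1−y)) < 1. -/
/-!
Fix `y` and let `D(x)` be the left side minus the right side, for `0 ≤ x < 1 - y`. Termwise
differentiation gives `z Li₂'(z) = -log (1 - z)`, and the three arguments have logarithmic
derivatives `1/(x(1-x))`, `1/x`, `1/(1-x)`. Since `1 - xy/((1-x)(1-y))`, `1 - x/(1-y)` and
`1 - y/(1-x)` are `1-x-y` divided by `(1-x)(1-y)`, `1-y` and `1-x`, `D'` is a combination of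
`log (1-x-y)`, `log (1-x)`, `log (1-y)` whose coefficients all cancel. So `D` is constant, and
`D 0 = 0`.
-/

open Real

/-- The real dilogarithm `Li₂(x) = ∑_{k≥1} xᵏ/k²`. -/
noncomputable def Li2 (x : ℝ) : ℝ := ∑' n : ℕ, x ^ (n + 1) / ((n : ℝ) + 1) ^ 2

lemma Li2_zero : Li2 0 = 0 := by
  simp [Li2]

lemma hasDerivAt_Li2_tsum {z : ℝ} (hz : |z| < 1) :
    HasDerivAt Li2 (∑' n : ℕ, z ^ n / ((n : ℝ) + 1)) z := by
  set r : ℝ := (1 + |z|) / 2 with hr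
  have hr0 : 0 < r := by positivity
  have hzr : |z| < r := by linarith [hr]
  have hr1 : r < 1 := by linarith [hr]
  refine hasDerivAt_tsum_of_isPreconnected (u := fun n : ℕ => r ^ n)
    (g' := fun (n : ℕ) (w : ℝ) => w ^ n / ((n : ℝ) + 1))
    (summable_geometric_of_lt_one hr0.le hr1) Metric.isOpen_ball
    (convex_ball (0 : ℝ) r).isPreconnected ?_ ?_ (y₀ := 0) ?_ (by simp) ?_
  · intro n w _
    refine ((hasDerivAt_pow (n + 1) w).div_const (((n : ℝ) + 1) ^ 2)).congr_deriv ?_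
    rw [Nat.add_sub_cancel]
    push_cast
    field_simp
  · intro n w hw
    rw [Metric.mem_ball, dist_zero_right, norm_eq_abs] at hw
    rw [norm_div, norm_pow, norm_eq_abs, norm_eq_abs, abs_of_pos (by positivity : (0 : ℝ) < n + 1)]
    calc |w| ^ n / ((n : ℝ) + 1) ≤ |w| ^ n := div_le_self (by positivity) (by simp)
      _ ≤ r ^ n := pow_le_pow_left₀ (abs_nonneg w) hw.le n
  · simpa using hr0
  · simpa using hzr

lemma tsum_pow_div_succ {z : ℝ} (hz0 : z ≠ 0) (hz : |z| < 1) :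
    ∑' n : ℕ, z ^ n / ((n : ℝ) + 1) = -log (1 - z) / z := by
  refine ((hasSum_pow_div_log_of_abs_lt_one hz).div_const z).tsum_eq ▸ tsum_congr fun n => ?_
  rw [pow_succ]
  field_simp

lemma hasDerivAt_Li2 {z : ℝ} (hz0 : z ≠ 0) (hz : |z| < 1) :
    HasDerivAt Li2 (-log (1 - z) / z) z :=
  tsum_pow_div_succ hz0 hz ▸ hasDerivAt_Li2_tsum hz

lemma HasDerivAt.Li2 {f : ℝ → ℝ} {f' t : ℝ} (hf : HasDerivAt f f' t) (h0 : f t ≠ 0)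
    (h1 : |f t| < 1) :
    HasDerivAt (fun s => Li2 (f s)) (-Real.log (1 - f t) * (f' / f t)) t :=
  ((hasDerivAt_Li2 h0 h1).comp t hf).congr_deriv (by ring)

lemma continuousAt_Li2 {z : ℝ} (hz : |z| < 1) : ContinuousAt Li2 z :=
  (hasDerivAt_Li2_tsum hz).continuousAt

lemma ContinuousAt.Li2 {f : ℝ → ℝ} {t : ℝ} (hf : ContinuousAt f t) (h1 : |f t| < 1) :
    ContinuousAt (fun s => Li2 (f s)) t :=
  (continuousAt_Li2 h1).comp hf

noncomputable def fiveTermDefect (y x : ℝ) : ℝ :=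
  Li2 (x * y / ((1 - x) * (1 - y))) - Li2 (x / (1 - y)) - Li2 (y / (1 - x)) +
    Li2 x + Li2 y + log (1 - x) * log (1 - y)

lemma fiveTermDefect_zero (y : ℝ) : fiveTermDefect y 0 = 0 := by
  simp [fiveTermDefect, Li2_zero]

lemma abs_five_term_args_lt_one {x y : ℝ} (hx : 0 ≤ x) (hy : 0 < y) (hxy : x + y < 1) :
    |x * y / ((1 - x) * (1 - y))| < 1 ∧ |x / (1 - y)| < 1 ∧ |y / (1 - x)| < 1 := by
  have h1x : 0 < 1 - x := by linarith
  have h1y : 0 < 1 - y := by linarith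
  refine ⟨?_, ?_, ?_⟩ <;> rw [abs_of_nonneg (by positivity), div_lt_one (by positivity)]
  · nlinarith
  · linarith
  · linarith

lemma continuousAt_fiveTermDefect {x y : ℝ} (hx : 0 ≤ x) (hy : 0 < y) (hxy : x + y < 1) :
    ContinuousAt (fiveTermDefect y) x := by
  obtain ⟨ha, hb, hc⟩ := abs_five_term_args_lt_one hx hy hxy
  have h1x : 1 - x ≠ 0 := by linarith
  have h1y : 1 - y ≠ 0 := by linarith
  have hA : ContinuousAt (fun s => Li2 (s * y / ((1 - s) * (1 - y)))) x :=
    ContinuousAt.Li2 (by fun_prop (disch := positivity)) ha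
  have hB : ContinuousAt (fun s => Li2 (s / (1 - y))) x := ContinuousAt.Li2 (by fun_prop) hb
  have hC : ContinuousAt (fun s => Li2 (y / (1 - s))) x := ContinuousAt.Li2 (by fun_prop) hc
  have hD : ContinuousAt Li2 x := continuousAt_Li2 (abs_lt.2 ⟨by linarith, by linarith⟩)
  unfold fiveTermDefect
  fun_prop (disch := assumption)

lemma hasDerivAt_fiveTermDefect {x y : ℝ} (hx : 0 < x) (hy : 0 < y) (hxy : x + y < 1) :
    HasDerivAt (fiveTermDefect y) 0 x := by
  obtain ⟨ha, hb, hc⟩ := abs_five_term_args_lt_one hx.le hy hxy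
  have h1x : 0 < 1 - x := by linarith
  have h1y : 0 < 1 - y := by linarith
  have h1xy : 0 < 1 - x - y := by linarith
  have hA := (((hasDerivAt_id' x).mul_const y).fun_div
    (((hasDerivAt_id' x).const_sub 1).mul_const (1 - y)) (by positivity)).Li2 (by positivity) ha
  have hB := ((hasDerivAt_id' x).div_const (1 - y)).Li2 (by positivity) hb
  have hC := ((hasDerivAt_const x y).fun_div ((hasDerivAt_id' x).const_sub 1)
    h1x.ne').Li2 (by positivity) hc
  have hD := hasDerivAt_Li2 hx.ne' (abs_lt.2 ⟨by linarith, by linarith⟩)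
  have hE := (((hasDerivAt_id' x).const_sub 1).log h1x.ne').mul_const (log (1 - y))
  refine (((((hA.sub hB).sub hC).add hD).add_const (Li2 y)).add hE).congr_deriv ?_
  have hlogA : log (1 - x * y / ((1 - x) * (1 - y))) =
      log (1 - x - y) - log (1 - x) - log (1 - y) := by
    rw [show 1 - x * y / ((1 - x) * (1 - y)) = (1 - x - y) / ((1 - x) * (1 - y)) by
      field_simp; ring, log_div h1xy.ne' (by positivity), log_mul h1x.ne' h1y.ne']
    ring
  have hlogB : log (1 - x / (1 - y)) = log (1 - x - y) - log (1 - y) := by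
    rw [show 1 - x / (1 - y) = (1 - x - y) / (1 - y) by field_simp; ring,
      log_div h1xy.ne' h1y.ne']
  have hlogC : log (1 - y / (1 - x)) = log (1 - x - y) - log (1 - x) := by
    rw [show 1 - y / (1 - x) = (1 - x - y) / (1 - x) by field_simp,
      log_div h1xy.ne' h1x.ne']
  rw [hlogA, hlogB, hlogC]
  field_simp
  ring

theorem dilog_five_term_general (x y : ℝ) (hx0 : 0 < x) (hy0 : 0 < y)
    (hxy : x + y < 1) :
    Li2 (x * y / ((1 - x) * (1 - y))) - Li2 (x / (1 - y)) - Li2 (y / (1 - x)) =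
      -Li2 x - Li2 y - Real.log (1 - x) * Real.log (1 - y) := by
  obtain ⟨_, _, hslope⟩ := exists_hasDerivAt_eq_slope (fiveTermDefect y) 0 hx0
    (fun t ht => (continuousAt_fiveTermDefect ht.1 hy0 (by linarith [ht.2])).continuousWithinAt)
    (fun t ht => hasDerivAt_fiveTermDefect ht.1 hy0 (by linarith [ht.2]))
  have hconst : fiveTermDefect y x = 0 := by
    simpa [fiveTermDefect_zero, hx0.ne'] using hslope.symm
  unfold fiveTermDefect at hconst
  linarith

/-- The five-term relation for the dilogarithm: for `x, y ∈ (0,1)` with `x + y < 1`,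
`Li₂(xy/((1−x)(1−y))) − Li₂(x/(1−y)) − Li₂(y/(1−x))
  = −Li₂(x) − Li₂(y) − log(1−x)·log(1−y)`. -/
theorem dilog_five_term (x y : ℝ) (hx0 : 0 < x) (hx1 : x < 1) (hy0 : 0 < y) (hy1 : y < 1)
    (hxy : x + y < 1) :
    Li2 (x * y / ((1 - x) * (1 - y))) - Li2 (x / (1 - y)) - Li2 (y / (1 - x)) =
      -Li2 x - Li2 y - Real.log (1 - x) * Real.log (1 - y) :=
  dilog_five_term_general x y hx0 hy0 hxy
end

section
/- For 0 < x < y < 1, the double polylogarithm identity Li_{1,2}(y,x) + Li_{1,2}(1/y, xy) = H(x; 0, 1/y, 1) + H(x; 0, 1, 1/y) holds, where H(x; σ₁,…,σₙ) denotes the hyperlogarithm ∫₀ˣ dz/(z−σ₁) ∫₀^z … ; that is, Σ_{0<k₁<k₂} y^{k₁}x^{k₂}/(k₁k₂²) + Σ_{0<k₁<k₂} y^{−k₁}(xy)^{k₂}/(k₁k₂²) = H(x;[0,1/y,1]) + H(x;[0,1,1/y]). -/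
/-- The double polylogarithm `Li_{1,2}(z₁,z₂) = ∑_{0<k₁<k₂} z₁^{k₁} z₂^{k₂}/(k₁ k₂²)`,
parametrized by `k₁ = p.1 + 1`, `k₂ = p.1 + p.2 + 2`. -/
noncomputable def Li12 (z1 z2 : ℝ) : ℝ :=
  ∑' p : ℕ × ℕ,
    z1 ^ (p.1 + 1) * z2 ^ (p.1 + p.2 + 2) /
      (((p.1 : ℝ) + 1) * ((p.1 : ℝ) + (p.2 : ℝ) + 2) ^ 2)

/-- Hyperlogarithms: `H(z; []) = 1`,
`H(z; σ₁…σₙ) = ∫₀^z H(t; σ₂…σₙ)/(t − σ₁) dt`. -/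
noncomputable def Hlog : List ℝ → ℝ → ℝ
  | [] => fun _ => 1
  | σ :: w => fun z => ∫ t in (0 : ℝ)..z, Hlog w t / (t - σ)

set_option maxHeartbeats 1000000

open MeasureTheory Set

lemma hlog_one {c t : ℝ} (hc : 1 ≤ c) (ht0 : 0 ≤ t) (ht1 : t < 1) :
    Hlog [c] t = Real.log (1 - t / c) := by
  have hc0 : (0:ℝ) < c := lt_of_lt_of_le one_pos hc
  have htc : t < c := lt_of_lt_of_le ht1 hc
  have key : ∀ u ∈ Set.uIcc (0:ℝ) t, HasDerivAt (fun v => Real.log (c - v)) (1 / (u - c)) u := by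
    intro u hu
    rw [Set.uIcc_of_le ht0] at hu
    have hcu : c - u ≠ 0 := by nlinarith [hu.1, hu.2]
    have h1 : HasDerivAt (fun v : ℝ => c - v) (-1) u := by
      simpa using (hasDerivAt_id u).const_sub c
    have h2 := (Real.hasDerivAt_log hcu).comp u h1
    convert h2 using 1
    have huc : u - c ≠ 0 := fun h => hcu (by linarith)
    · rfl
    · rfl
    · rfl
    rw [show u - c = -(c - u) by ring, one_div, inv_neg]; ring

  have hint : IntervalIntegrable (fun u : ℝ => 1 / (u - c)) volume 0 t := by
    apply ContinuousOn.intervalIntegrable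
    apply ContinuousOn.div continuousOn_const (continuousOn_id.sub continuousOn_const)
    intro u hu
    rw [Set.uIcc_of_le ht0] at hu
    have : u < c := lt_of_le_of_lt hu.2 htc
    intro h; simp only [id, Pi.sub_apply] at h; nlinarith
  have heval := intervalIntegral.integral_eq_sub_of_hasDerivAt key hint
  have : Hlog [c] t = ∫ u in (0:ℝ)..t, 1 / (u - c) := by
    simp [Hlog]
  rw [this, heval]
  rw [show (1 : ℝ) - t / c = (c - t) / c by field_simp]
  rw [Real.log_div (by nlinarith) (by nlinarith)]
  simp

lemma swap_lemma {x : ℝ} (hx : 0 ≤ x) {f : ℕ × ℕ → ℝ → ℝ}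
    (hcont : ∀ p, Continuous (f p))
    (hpos : ∀ p, ∀ s ∈ Set.Ioc (0:ℝ) x, 0 ≤ f p s)
    (hsum : Summable fun p => ∫ s in Set.Ioc (0:ℝ) x, f p s) :
    (∫ s in (0:ℝ)..x, ∑' p, f p s) = ∑' p, ∫ s in (0:ℝ)..x, f p s := by
  simp only [intervalIntegral.integral_of_le hx]
  have h1 : ∀ p, Integrable (f p) (volume.restrict (Set.Ioc 0 x)) := fun p =>
    (hcont p).integrableOn_Ioc
  apply MeasureTheory.integral_tsum (fun p => (hcont p).aestronglyMeasurable)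
  have key : ∀ p, (∫⁻ s, ‖f p s‖ₑ ∂(volume.restrict (Set.Ioc (0:ℝ) x)))
      = ENNReal.ofReal (∫ s in Set.Ioc (0:ℝ) x, f p s) := by
    intro p
    rw [MeasureTheory.ofReal_integral_eq_lintegral_ofReal (h1 p)
      (by filter_upwards [ae_restrict_mem measurableSet_Ioc] with s hs using hpos p s hs)]
    apply lintegral_congr_ae
    filter_upwards [ae_restrict_mem measurableSet_Ioc] with s hs
    rw [Real.enorm_eq_ofReal (hpos p s hs)]
  rw [tsum_congr key,
    ← ENNReal.ofReal_tsum_of_nonneg (fun p => setIntegral_nonneg measurableSet_Ioc (hpos p)) hsum]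
  exact ENNReal.ofReal_ne_top

lemma hlog_two {b c t : ℝ} (hb : 1 ≤ b) (hc : 1 ≤ c) (ht0 : 0 ≤ t) (ht1 : t < 1) :
    Hlog [b, c] t = ∑' p : ℕ × ℕ, t ^ (p.1 + p.2 + 2) /
      (((p.1:ℝ) + (p.2:ℝ) + 2) * (((p.1:ℝ) + 1) * c ^ (p.1 + 1) * b ^ (p.2 + 1))) := by
  have hb0 : (0:ℝ) < b := lt_of_lt_of_le one_pos hb
  have hc0 : (0:ℝ) < c := lt_of_lt_of_le one_pos hc
  set f : ℕ × ℕ → ℝ → ℝ := fun p s =>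
    s ^ (p.1 + p.2 + 1) * (((p.1:ℝ) + 1) * c ^ (p.1 + 1) * b ^ (p.2 + 1))⁻¹ with hf
  -- pointwise expansion of the integrand
  have hpt : ∀ s : ℝ, 0 ≤ s → s < 1 → Hlog [c] s / (s - b) = ∑' p : ℕ × ℕ, f p s := by
    intro s hs0 hs1
    have hsb : s < b := lt_of_lt_of_le hs1 hb
    have hbs : b - s ≠ 0 := ne_of_gt (by linarith)
    have hsc1 : |s / c| < 1 := by
      rw [abs_of_nonneg (div_nonneg hs0 hc0.le)]
      exact (div_lt_one hc0).mpr (lt_of_lt_of_le hs1 hc)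
    set g : ℕ → ℝ := fun k => (s / c) ^ (k + 1) / ((k : ℝ) + 1) with hg
    set h : ℕ → ℝ := fun m => (s / b) ^ m * b⁻¹ with hh
    have hgs : HasSum g (-Real.log (1 - s / c)) := Real.hasSum_pow_div_log_of_abs_lt_one hsc1
    have hhs : HasSum h ((1 - s / b)⁻¹ * b⁻¹) :=
      (hasSum_geometric_of_lt_one (div_nonneg hs0 hb0.le)
        ((div_lt_one hb0).mpr hsb)).mul_right b⁻¹
    have hgnn : ∀ k, 0 ≤ g k := fun k => by
      apply div_nonneg (pow_nonneg (div_nonneg hs0 hc0.le) _); positivity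
    have hhnn : ∀ m, 0 ≤ h m := fun m => by
      apply mul_nonneg (pow_nonneg (div_nonneg hs0 hb0.le) _); positivity
    have hgabs : Summable fun k => ‖g k‖ := by
      simpa [Real.norm_eq_abs, abs_of_nonneg (hgnn _)] using hgs.summable
    have hhabs : Summable fun m => ‖h m‖ := by
      simpa [Real.norm_eq_abs, abs_of_nonneg (hhnn _)] using hhs.summable
    have hprod := tsum_mul_tsum_of_summable_norm hgabs hhabs
    rw [hgs.tsum_eq, hhs.tsum_eq] at hprod
    have hlhs : Hlog [c] s / (s - b) = -Real.log (1 - s / c) * ((1 - s / b)⁻¹ * b⁻¹) := by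
      rw [hlog_one hc hs0 hs1]
      have h1 : (1 - s / b)⁻¹ * b⁻¹ = (b - s)⁻¹ := by
        rw [← mul_inv]; congr 1; field_simp
      rw [h1]
      have h2 : s - b ≠ 0 := fun hz => hbs (by linarith)
      field_simp
      ring
    rw [hlhs, hprod]
    apply tsum_congr
    intro p
    have hk1 : ((p.1 : ℝ) + 1) ≠ 0 := by positivity
    simp only [hg, hh, hf, div_pow]
    field_simp
    ring
  -- termwise integrals
  have hI : ∀ p : ℕ × ℕ, (∫ s in (0:ℝ)..t, f p s) = t ^ (p.1 + p.2 + 2) /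
      (((p.1:ℝ) + (p.2:ℝ) + 2) * (((p.1:ℝ) + 1) * c ^ (p.1 + 1) * b ^ (p.2 + 1))) := by
    intro p
    rw [hf]
    rw [intervalIntegral.integral_mul_const, integral_pow]
    rw [zero_pow (by omega), sub_zero]
    have hD : ((p.1:ℝ) + 1) * c ^ (p.1 + 1) * b ^ (p.2 + 1) ≠ 0 := by positivity
    have hN : ((p.1:ℝ) + (p.2:ℝ) + 2) ≠ 0 := by positivity
    push_cast
    field_simp
    ring
  -- summability of the termwise integrals
  have hsum : Summable fun p : ℕ × ℕ => ∫ s in Set.Ioc (0:ℝ) t, f p s := by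
    have heq : (fun p : ℕ × ℕ => ∫ s in Set.Ioc (0:ℝ) t, f p s)
        = fun p : ℕ × ℕ => t ^ (p.1 + p.2 + 2) /
          (((p.1:ℝ) + (p.2:ℝ) + 2) * (((p.1:ℝ) + 1) * c ^ (p.1 + 1) * b ^ (p.2 + 1))) := by
      funext p
      rw [← intervalIntegral.integral_of_le ht0, hI p]
    rw [heq]
    have hgeo : Summable fun k : ℕ => t ^ (k + 1) := by
      simpa [pow_succ'] using (summable_geometric_of_lt_one ht0 ht1).mul_left t
    have hmaj : Summable fun q : ℕ × ℕ => t ^ (q.1 + 1) * t ^ (q.2 + 1) :=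
      hgeo.mul_of_nonneg hgeo (fun k => pow_nonneg ht0 _) (fun m => pow_nonneg ht0 _)
    apply Summable.of_nonneg_of_le _ _ hmaj
    · intro p; positivity
    · intro p
      have hden : 1 ≤ ((p.1:ℝ) + (p.2:ℝ) + 2) * (((p.1:ℝ) + 1) * c ^ (p.1 + 1) * b ^ (p.2 + 1)) := by
        have h1 : (1:ℝ) ≤ c ^ (p.1 + 1) := one_le_pow₀ hc
        have h2 : (1:ℝ) ≤ b ^ (p.2 + 1) := one_le_pow₀ hb
        have h0a : (0:ℝ) ≤ (p.1:ℝ) := Nat.cast_nonneg _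
        have h0b : (0:ℝ) ≤ (p.2:ℝ) := Nat.cast_nonneg _
        have m1 : (1:ℝ) ≤ ((p.1:ℝ) + 1) * c ^ (p.1 + 1) := by nlinarith
        have m2 : (1:ℝ) ≤ ((p.1:ℝ) + 1) * c ^ (p.1 + 1) * b ^ (p.2 + 1) := by nlinarith
        nlinarith
      calc t ^ (p.1 + p.2 + 2) / (((p.1:ℝ) + (p.2:ℝ) + 2) *
              (((p.1:ℝ) + 1) * c ^ (p.1 + 1) * b ^ (p.2 + 1)))
          ≤ t ^ (p.1 + p.2 + 2) := div_le_self (pow_nonneg ht0 _) hden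
        _ = t ^ (p.1 + 1) * t ^ (p.2 + 1) := by rw [← pow_add]; ring_nf
  -- put everything together
  have : Hlog [b, c] t = ∫ s in (0:ℝ)..t, ∑' p : ℕ × ℕ, f p s := by
    show (∫ s in (0:ℝ)..t, Hlog [c] s / (s - b)) = _
    apply intervalIntegral.integral_congr
    intro s hs
    rw [Set.uIcc_of_le ht0] at hs
    exact hpt s hs.1 (lt_of_le_of_lt hs.2 ht1)
  rw [this, swap_lemma ht0 (fun p => by fun_prop) ?pos hsum]
  · exact tsum_congr hI
  case pos =>
    intro p s hs
    have : 0 ≤ s := hs.1.le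
    positivity

lemma hlog_three {b c x : ℝ} (hb : 1 ≤ b) (hc : 1 ≤ c) (hx0 : 0 ≤ x) (hx1 : x < 1) :
    Hlog [0, b, c] x = ∑' p : ℕ × ℕ, x ^ (p.1 + p.2 + 2) /
      (((p.1:ℝ) + (p.2:ℝ) + 2) ^ 2 * (((p.1:ℝ) + 1) * c ^ (p.1 + 1) * b ^ (p.2 + 1))) := by
  set f : ℕ × ℕ → ℝ → ℝ := fun p t =>
    t ^ (p.1 + p.2 + 1) *
      (((p.1:ℝ) + (p.2:ℝ) + 2) * (((p.1:ℝ) + 1) * c ^ (p.1 + 1) * b ^ (p.2 + 1)))⁻¹ with hf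
  have hpt : ∀ t : ℝ, 0 ≤ t → t ≤ x → Hlog [b, c] t / (t - 0) = ∑' p : ℕ × ℕ, f p t := by
    intro t ht0 htx
    rcases eq_or_lt_of_le ht0 with h0 | h0
    · rw [← h0]
      simp [hf, zero_pow]
    · rw [sub_zero, hlog_two hb hc ht0 (lt_of_le_of_lt htx hx1), ← tsum_div_const]
      apply tsum_congr
      intro p
      have htne : t ≠ 0 := ne_of_gt h0
      rw [hf, div_div, show p.1 + p.2 + 2 = (p.1 + p.2 + 1) + 1 from rfl, pow_succ,
        mul_div_mul_right _ _ htne, div_eq_mul_inv]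
  have hI : ∀ p : ℕ × ℕ, (∫ t in (0:ℝ)..x, f p t) = x ^ (p.1 + p.2 + 2) /
      (((p.1:ℝ) + (p.2:ℝ) + 2) ^ 2 * (((p.1:ℝ) + 1) * c ^ (p.1 + 1) * b ^ (p.2 + 1))) := by
    intro p
    rw [hf]
    rw [intervalIntegral.integral_mul_const, integral_pow]
    rw [zero_pow (by omega), sub_zero]
    have hD : ((p.1:ℝ) + 1) * c ^ (p.1 + 1) * b ^ (p.2 + 1) ≠ 0 := by positivity
    have hN : ((p.1:ℝ) + (p.2:ℝ) + 2) ≠ 0 := by positivity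
    push_cast
    field_simp
    ring
  have hsum : Summable fun p : ℕ × ℕ => ∫ t in Set.Ioc (0:ℝ) x, f p t := by
    have heq : (fun p : ℕ × ℕ => ∫ t in Set.Ioc (0:ℝ) x, f p t)
        = fun p : ℕ × ℕ => x ^ (p.1 + p.2 + 2) /
          (((p.1:ℝ) + (p.2:ℝ) + 2) ^ 2 * (((p.1:ℝ) + 1) * c ^ (p.1 + 1) * b ^ (p.2 + 1))) := by
      funext p
      rw [← intervalIntegral.integral_of_le hx0, hI p]
    rw [heq]
    have hgeo : Summable fun k : ℕ => x ^ (k + 1) := by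
      simpa [pow_succ'] using (summable_geometric_of_lt_one hx0 hx1).mul_left x
    have hmaj : Summable fun q : ℕ × ℕ => x ^ (q.1 + 1) * x ^ (q.2 + 1) :=
      hgeo.mul_of_nonneg hgeo (fun k => pow_nonneg hx0 _) (fun m => pow_nonneg hx0 _)
    apply Summable.of_nonneg_of_le _ _ hmaj
    · intro p; positivity
    · intro p
      have hden : 1 ≤ ((p.1:ℝ) + (p.2:ℝ) + 2) ^ 2 *
          (((p.1:ℝ) + 1) * c ^ (p.1 + 1) * b ^ (p.2 + 1)) := by
        have h1 : (1:ℝ) ≤ c ^ (p.1 + 1) := one_le_pow₀ hc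
        have h2 : (1:ℝ) ≤ b ^ (p.2 + 1) := one_le_pow₀ hb
        have h0a : (0:ℝ) ≤ (p.1:ℝ) := Nat.cast_nonneg _
        have h0b : (0:ℝ) ≤ (p.2:ℝ) := Nat.cast_nonneg _
        have m1 : (1:ℝ) ≤ ((p.1:ℝ) + 1) * c ^ (p.1 + 1) := by nlinarith
        have m2 : (1:ℝ) ≤ ((p.1:ℝ) + 1) * c ^ (p.1 + 1) * b ^ (p.2 + 1) := by nlinarith
        have m3 : (1:ℝ) ≤ ((p.1:ℝ) + (p.2:ℝ) + 2) ^ 2 := by nlinarith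
        nlinarith
      calc x ^ (p.1 + p.2 + 2) / (((p.1:ℝ) + (p.2:ℝ) + 2) ^ 2 *
              (((p.1:ℝ) + 1) * c ^ (p.1 + 1) * b ^ (p.2 + 1)))
          ≤ x ^ (p.1 + p.2 + 2) := div_le_self (pow_nonneg hx0 _) hden
        _ = x ^ (p.1 + 1) * x ^ (p.2 + 1) := by rw [← pow_add]; ring_nf
  have hmain : Hlog [0, b, c] x = ∫ t in (0:ℝ)..x, ∑' p : ℕ × ℕ, f p t := by
    show (∫ t in (0:ℝ)..x, Hlog [b, c] t / (t - 0)) = _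
    apply intervalIntegral.integral_congr
    intro t ht
    rw [Set.uIcc_of_le hx0] at ht
    exact hpt t ht.1 ht.2
  rw [hmain, swap_lemma hx0 (fun p => by fun_prop) ?pos hsum]
  · exact tsum_congr hI
  case pos =>
    intro p t ht
    have : 0 ≤ t := ht.1.le
    positivity

/-- For `0 < x < y < 1`:
`Li_{1,2}(y,x) + Li_{1,2}(1/y, xy) = H(x; [0, 1/y, 1]) + H(x; [0, 1, 1/y])`. -/
theorem li12_hyperlog_identity (x y : ℝ) (hx : 0 < x) (hxy : x < y) (hy : y < 1) :
    Li12 y x + Li12 (1 / y) (x * y) = Hlog [0, 1 / y, 1] x + Hlog [0, 1, 1 / y] x := by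
  have hy0 : 0 < y := lt_trans hx hxy
  have hyne : y ≠ 0 := ne_of_gt hy0
  have h1y : 1 ≤ 1 / y := by rw [le_div_iff₀ hy0]; linarith
  have hx1 : x < 1 := lt_trans hxy hy
  have H1 := hlog_three (b := 1 / y) (c := 1) h1y le_rfl hx.le hx1
  have H2 := hlog_three (b := 1) (c := 1 / y) le_rfl h1y hx.le hx1
  have e1 : Li12 y x = ∑' p : ℕ × ℕ, x ^ (p.1 + p.2 + 2) /
      (((p.1:ℝ) + (p.2:ℝ) + 2) ^ 2 *
        (((p.1:ℝ) + 1) * (1 / y) ^ (p.1 + 1) * (1:ℝ) ^ (p.2 + 1))) := by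
    rw [Li12]; apply tsum_congr; intro p
    have h1 : ((p.1:ℝ) + 1) ≠ 0 := by positivity
    have h2 : ((p.1:ℝ) + (p.2:ℝ) + 2) ≠ 0 := by positivity
    field_simp
    rw [← mul_pow, mul_one_div_cancel hyne]; simp
  have e2 : Li12 (1 / y) (x * y) = ∑' p : ℕ × ℕ, x ^ (p.1 + p.2 + 2) /
      (((p.1:ℝ) + (p.2:ℝ) + 2) ^ 2 *
        (((p.1:ℝ) + 1) * (1:ℝ) ^ (p.1 + 1) * (1 / y) ^ (p.2 + 1))) := by
    rw [Li12]; apply tsum_congr; intro p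
    have h1 : ((p.1:ℝ) + 1) ≠ 0 := by positivity
    have h2 : ((p.1:ℝ) + (p.2:ℝ) + 2) ≠ 0 := by positivity
    field_simp
    simp only [one_pow, mul_one, one_div, inv_pow, mul_pow]; field_simp; ring
  rw [e1, e2, H1, H2, add_comm]
end

section
/- For every n ∈ ℕ with n ≥ 1 and every z ≥ 0, ∫₀^∞ [ (1/x − 1/(x+z))·Liₙ(−x−z) − (1/x)·Liₙ(−z/(x+1)) ] dx = n·Li_{n+1}(−z). -/
/-- The real polylogarithm, defined on `(-∞, 1)` by `Li₀(w) = w/(1−w)` and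
`Li_{n+1}(w) = ∫₀^w Liₙ(t)/t dt` (so `Li₁(w) = −log(1−w)`). -/
noncomputable def polylog : ℕ → ℝ → ℝ
  | 0, w => w / (1 - w)
  | n + 1, w => ∫ t in (0 : ℝ)..w, polylog n t / t

/-!
Write `F_n(z, x)` for the integrand. For `x > 0` one has `F_0(z, x) = 0`, and differentiating in `z`
gives `∂_z F_{n+1} = F_n / z + R_n`, where `R_n = (Li_{n+1} − Li_n)(−x−z) / (x+z)²` is the
`x`-derivative of `−Li_{n+1}(−x−z) / (x+z)` and so integrates over `x > 0` to `Li_{n+1}(−z) / z`.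
By induction, `∫ ∂_z F_{n+1} dx = (n+1) Li_{n+1}(−z) / z`; integrating over `z ∈ (0, Z]` and
exchanging the order of integration yields `(n+1) Li_{n+2}(−Z)`. Fubini is justified by carrying
the bound `∫ |F_n(z, ·)| ≤ C √z` along the induction; it rests on `|Li_n(−s)| ≤ 2ⁿ √s`.
-/

open Set MeasureTheory Filter Topology Interval

theorem polylog_apply_zero (n : ℕ) : polylog n 0 = 0 := by
  cases n <;> simp [polylog]

theorem abs_polylog_le_abs (n : ℕ) {t : ℝ} (ht : t ≤ 0) : |polylog n t| ≤ |t| := by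
  induction n generalizing t with
  | zero =>
    rw [polylog, abs_div]
    exact div_le_self (abs_nonneg t) (by rw [abs_of_pos (by linarith)]; linarith)
  | succ n ih =>
    have hbound : ∀ s ∈ Ι 0 t, ‖polylog n s / s‖ ≤ 1 := fun s hs => by
      rw [uIoc_of_ge ht] at hs
      rw [Real.norm_eq_abs, abs_div]
      exact div_le_one_of_le₀ (ih hs.2) (abs_nonneg s)
    simpa [polylog] using intervalIntegral.norm_integral_le_of_norm_le_const hbound

theorem abs_polylog_div_self_le_one (n : ℕ) {t : ℝ} (ht : t ≤ 0) : |polylog n t / t| ≤ 1 := by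
  rw [abs_div]
  exact div_le_one_of_le₀ (abs_polylog_le_abs n ht) (abs_nonneg t)

theorem intervalIntegrable_polylog_div_self {n : ℕ} (hc : ContinuousOn (polylog n) (Iic 0))
    {a b : ℝ} (ha : a ≤ 0) (hb : b ≤ 0) :
    IntervalIntegrable (fun t => polylog n t / t) volume a b := by
  have hsub : Ι a b ⊆ Iic 0 := fun t ht => (uIoc_subset_uIcc ht).2.trans (max_le ha hb)
  have hmeas : AEStronglyMeasurable (fun t => polylog n t / t) (volume.restrict (Iic 0)) := by
    rw [← Measure.restrict_congr_set Iio_ae_eq_Iic]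
    exact ((hc.mono Iio_subset_Iic_self).div continuousOn_id fun _ ht => ht.ne)
      |>.aestronglyMeasurable measurableSet_Iio
  refine (intervalIntegrable_const (c := (1 : ℝ))).mono_fun' (hmeas.mono_set hsub) ?_
  filter_upwards [ae_restrict_mem measurableSet_uIoc] with t ht
  exact abs_polylog_div_self_le_one n (hsub ht)

theorem continuousOn_polylog (n : ℕ) : ContinuousOn (polylog n) (Iic 0) := by
  induction n with
  | zero =>
    exact continuousOn_id.div (by fun_prop) fun t (ht : t ≤ 0) => by linarith
  | succ n ih =>
    refine (LipschitzOnWith.mk_one fun a ha b hb => ?_).continuousOn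
    have hdiff : polylog (n + 1) a - polylog (n + 1) b = ∫ t in b..a, polylog n t / t :=
      intervalIntegral.integral_interval_sub_left (intervalIntegrable_polylog_div_self ih le_rfl ha)
        (intervalIntegrable_polylog_div_self ih le_rfl hb)
    have hbound : ∀ t ∈ Ι b a, ‖polylog n t / t‖ ≤ 1 := fun t ht =>
      abs_polylog_div_self_le_one n ((uIoc_subset_uIcc ht).2.trans (max_le hb ha))
    simpa [Real.dist_eq, hdiff, abs_sub_comm] using
      intervalIntegral.norm_integral_le_of_norm_le_const hbound

theorem ContinuousOn.polylog {α : Type*} [TopologicalSpace α] (n : ℕ) {g : α → ℝ} {s : Set α}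
    (hg : ContinuousOn g s) (hs : ∀ x ∈ s, g x ≤ 0) : ContinuousOn (fun x => polylog n (g x)) s :=
  (continuousOn_polylog n).comp hg hs

theorem hasDerivAt_polylog_succ (n : ℕ) {w : ℝ} (hw : w < 0) :
    HasDerivAt (polylog (n + 1)) (polylog n w / w) w := by
  have hc : ContinuousOn (fun t => polylog n t / t) (Iio 0) :=
    ((continuousOn_polylog n).mono Iio_subset_Iic_self).div continuousOn_id fun t ht => ht.ne
  exact intervalIntegral.integral_hasDerivAt_right
    (intervalIntegrable_polylog_div_self (continuousOn_polylog n) le_rfl hw.le)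
    (hc.stronglyMeasurableAtFilter isOpen_Iio w hw) (hc.continuousAt (isOpen_Iio.mem_nhds hw))

theorem polylog_succ_neg (n : ℕ) (s : ℝ) :
    polylog (n + 1) (-s) = ∫ x in (0 : ℝ)..s, polylog n (-x) / x := by
  rw [polylog, intervalIntegral.integral_symm, ← neg_zero,
    ← intervalIntegral.integral_comp_neg, ← intervalIntegral.integral_neg, neg_zero]
  simp only [div_neg, neg_neg]

theorem abs_polylog_neg_le_sqrt (n : ℕ) {s : ℝ} (hs : 0 ≤ s) :
    |polylog n (-s)| ≤ 2 ^ n * √s := by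
  induction n generalizing s with
  | zero =>
    have hr := Real.sq_sqrt hs
    have hr0 := Real.sqrt_nonneg s
    rw [polylog, abs_div, abs_neg, abs_of_nonneg hs, abs_of_pos (by linarith), pow_zero, one_mul,
      div_le_iff₀ (by linarith)]
    nlinarith [mul_nonneg hr0 (sq_nonneg (√s - 1))]
  | succ n ih =>
    have hbound : ∀ᵐ x ∂volume.restrict (Ι 0 s),
        ‖polylog n (-x) / x‖ ≤ 2 ^ n * x ^ (-(1 / 2) : ℝ) := by
      filter_upwards [ae_restrict_mem measurableSet_uIoc] with x hx
      rw [uIoc_of_le hs] at hx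
      rw [Real.norm_eq_abs, abs_div, abs_of_pos hx.1, div_le_iff₀ hx.1, mul_assoc,
        Real.rpow_neg hx.1.le, ← Real.sqrt_eq_rpow, ← div_eq_inv_mul, Real.div_sqrt]
      exact ih hx.1.le
    have hint : IntervalIntegrable (fun x => 2 ^ n * x ^ (-(1 / 2) : ℝ)) volume 0 s :=
      (intervalIntegral.intervalIntegrable_rpow' (by norm_num)).const_mul _
    rw [polylog_succ_neg]
    refine (intervalIntegral.norm_integral_le_abs_of_norm_le hbound hint).trans_eq ?_
    rw [intervalIntegral.integral_const_mul, integral_rpow (Or.inl (by norm_num)),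
      Real.zero_rpow (by norm_num), Real.sqrt_eq_rpow]
    norm_num
    rw [abs_div, abs_of_nonneg (Real.rpow_nonneg hs _), abs_of_pos (by norm_num)]
    ring

noncomputable def bubbleIntegrand (n : ℕ) (z x : ℝ) : ℝ :=
  (1 / x - 1 / (x + z)) * polylog n (-x - z) - (1 / x) * polylog n (-z / (x + 1))

noncomputable def bubbleRemainder (n : ℕ) (z x : ℝ) : ℝ :=
  (polylog (n + 1) (-x - z) - polylog n (-x - z)) / (x + z) ^ 2

/-- `∂F_{n+1}/∂z` (note the shift of index). -/
noncomputable def bubbleIntegrandDeriv (n : ℕ) (z x : ℝ) : ℝ :=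
  bubbleIntegrand n z x / z + bubbleRemainder n z x

theorem bubbleIntegrand_zero_eqOn {z : ℝ} (hz : 0 ≤ z) : EqOn (bubbleIntegrand 0 z) 0 (Ioi 0) := by
  intro x (hx : 0 < x)
  have h1 : 1 - (-x - z) = 1 + x + z := by ring
  have h2 : 1 - -z / (x + 1) = (1 + x + z) / (x + 1) := by field_simp; ring
  simp only [bubbleIntegrand, polylog, h1, h2, Pi.zero_apply]
  field_simp
  ring

theorem bubbleIntegrand_apply_zero (n : ℕ) (x : ℝ) : bubbleIntegrand n 0 x = 0 := by
  simp [bubbleIntegrand, polylog_apply_zero]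

theorem continuousOn_bubbleIntegrand (n : ℕ) :
    ContinuousOn (fun p : ℝ × ℝ => bubbleIntegrand n p.1 p.2) (Ici 0 ×ˢ Ioi 0) := by
  have hz : ∀ p ∈ Ici (0 : ℝ) ×ˢ Ioi (0 : ℝ), 0 ≤ p.1 := fun p hp => hp.1
  have hx : ∀ p ∈ Ici (0 : ℝ) ×ˢ Ioi (0 : ℝ), 0 < p.2 := fun p hp => hp.2
  refine ContinuousOn.sub (ContinuousOn.mul ?_ (.polylog n (by fun_prop) ?_))
    (ContinuousOn.mul ?_ (.polylog n ?_ ?_))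
  · fun_prop (disch := intro p hp; have := hz p hp; have := hx p hp; positivity)
  · intro p hp; linarith [hz p hp, hx p hp]
  · fun_prop (disch := intro p hp; have := hx p hp; positivity)
  · fun_prop (disch := intro p hp; have := hx p hp; positivity)
  · intro p hp
    have := hz p hp; have := hx p hp
    rw [neg_div, neg_nonpos]; positivity

theorem continuousOn_bubbleRemainder (n : ℕ) :
    ContinuousOn (fun p : ℝ × ℝ => bubbleRemainder n p.1 p.2) (Ioi 0 ×ˢ Ioi 0) := by
  have hpos : ∀ p ∈ Ioi (0 : ℝ) ×ˢ Ioi (0 : ℝ), 0 < p.2 + p.1 := fun p hp => add_pos hp.2 hp.1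
  refine ContinuousOn.div (.sub (.polylog _ (by fun_prop) ?_) (.polylog _ (by fun_prop) ?_))
    (by fun_prop) fun p hp => (pow_pos (hpos p hp) 2).ne'
  all_goals intro p hp; linarith [hpos p hp]

theorem hasDerivAt_bubbleIntegrand_succ (n : ℕ) {z x : ℝ} (hz : 0 < z) (hx : 0 < x) :
    HasDerivAt (fun z => bubbleIntegrand (n + 1) z x) (bubbleIntegrandDeriv n z x) z := by
  have hxz : 0 < x + z := by linarith
  have hcoef : HasDerivAt (fun z => 1 / x - 1 / (x + z)) (1 / (x + z) ^ 2) z := by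
    have := (((hasDerivAt_id' z).const_add x).inv hxz.ne').const_sub x⁻¹
    simp only [one_div]
    exact this.congr_deriv (by ring)
  have hfirst :
      HasDerivAt (fun z => polylog (n + 1) (-x - z)) (polylog n (-x - z) / (x + z)) z := by
    have hin : HasDerivAt (fun z : ℝ => -x - z) (-1) z := (hasDerivAt_id' z).const_sub (-x)
    refine ((hasDerivAt_polylog_succ n (w := -x - z) (by linarith)).comp z hin).congr_deriv ?_
    rw [← neg_add', div_neg, neg_mul_neg, mul_one]
  have hsecond : HasDerivAt (fun z => polylog (n + 1) (-z / (x + 1)))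
      (polylog n (-z / (x + 1)) / z) z := by
    have hin : HasDerivAt (fun z : ℝ => -z / (x + 1)) (-1 / (x + 1)) z :=
      (hasDerivAt_neg z).div_const (x + 1)
    have hw : -z / (x + 1) < 0 := div_neg_of_neg_of_pos (by linarith) (by linarith)
    refine ((hasDerivAt_polylog_succ n hw).comp z hin).congr_deriv ?_
    field_simp
  refine ((hcoef.mul hfirst).sub (hsecond.const_mul (1 / x))).congr_deriv ?_
  simp only [bubbleIntegrandDeriv, bubbleIntegrand, bubbleRemainder]
  field_simp
  ring

theorem hasDerivAt_add_rpow_neg_half {z x : ℝ} (hz : 0 < z) (hx : 0 ≤ x) :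
    HasDerivAt (fun x => -2 * (x + z) ^ (-(1 / 2) : ℝ)) ((x + z) ^ (-(3 / 2) : ℝ)) x := by
  have hxz : x + z ≠ 0 := by linarith
  refine ((((hasDerivAt_id' x).add_const z).rpow_const (.inl hxz)).const_mul (-2)).congr_deriv ?_
  norm_num
  ring

theorem tendsto_add_rpow_neg_half (z : ℝ) :
    Tendsto (fun x => (x + z) ^ (-(1 / 2) : ℝ)) atTop (𝓝 0) :=
  (tendsto_rpow_neg_atTop (by norm_num)).comp (tendsto_atTop_add_const_right _ z tendsto_id)

theorem integrableOn_add_rpow_neg_three_halves {z : ℝ} (hz : 0 < z) :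
    IntegrableOn (fun x => (x + z) ^ (-(3 / 2) : ℝ)) (Ioi 0) :=
  integrableOn_Ioi_deriv_of_nonneg' (fun _ hx => hasDerivAt_add_rpow_neg_half hz hx)
    (fun x hx => Real.rpow_nonneg (by linarith [mem_Ioi.mp hx]) _)
    (by simpa using (tendsto_add_rpow_neg_half z).const_mul (-2))

theorem integral_add_rpow_neg_three_halves {z : ℝ} (hz : 0 < z) :
    ∫ x in Ioi 0, (x + z) ^ (-(3 / 2) : ℝ) = 2 * z ^ (-(1 / 2) : ℝ) := by
  rw [integral_Ioi_of_hasDerivAt_of_nonneg' (fun _ hx => hasDerivAt_add_rpow_neg_half hz hx)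
    (fun x hx => Real.rpow_nonneg (by linarith [mem_Ioi.mp hx]) _)
    (by simpa using (tendsto_add_rpow_neg_half z).const_mul (-2))]
  simp

theorem abs_bubbleRemainder_le (n : ℕ) {z x : ℝ} (hxz : 0 < x + z) :
    |bubbleRemainder n z x| ≤ 2 ^ (n + 2) * (x + z) ^ (-(3 / 2) : ℝ) := by
  have hneg : -x - z = -(x + z) := by ring
  have h1 := abs_polylog_neg_le_sqrt (n + 1) hxz.le
  have h0 := abs_polylog_neg_le_sqrt n hxz.le
  have hrpow : (x + z) ^ (-(3 / 2) : ℝ) = √(x + z) / (x + z) ^ 2 := by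
    rw [Real.sqrt_eq_rpow, ← Real.rpow_natCast, ← Real.rpow_sub hxz]
    norm_num
  rw [bubbleRemainder, hneg, abs_div, abs_of_pos (pow_pos hxz 2), hrpow, ← mul_div_assoc]
  gcongr
  calc |polylog (n + 1) (-(x + z)) - polylog n (-(x + z))|
      ≤ |polylog (n + 1) (-(x + z))| + |polylog n (-(x + z))| := abs_sub _ _
    _ ≤ 2 ^ (n + 1) * √(x + z) + 2 ^ n * √(x + z) := add_le_add h1 h0
    _ ≤ 2 ^ (n + 2) * √(x + z) := by
      rw [← add_mul]
      gcongr
      rw [pow_succ, pow_succ, pow_succ]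
      linarith [pow_pos (two_pos (α := ℝ)) n]

theorem integrableOn_bubbleRemainder (n : ℕ) {z : ℝ} (hz : 0 < z) :
    IntegrableOn (bubbleRemainder n z) (Ioi 0) := by
  refine ((integrableOn_add_rpow_neg_three_halves hz).const_mul (2 ^ (n + 2))).mono' ?_ ?_
  · exact ((continuousOn_bubbleRemainder n).comp (Continuous.prodMk_right z).continuousOn
      fun x hx => ⟨hz, hx⟩).aestronglyMeasurable measurableSet_Ioi
  · filter_upwards [ae_restrict_mem measurableSet_Ioi] with x hx
    exact abs_bubbleRemainder_le n (by linarith [mem_Ioi.mp hx])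

theorem integral_abs_bubbleRemainder_le (n : ℕ) {z : ℝ} (hz : 0 < z) :
    ∫ x in Ioi 0, |bubbleRemainder n z x| ≤ 2 ^ (n + 3) * z ^ (-(1 / 2) : ℝ) := by
  calc ∫ x in Ioi 0, |bubbleRemainder n z x|
      ≤ ∫ x in Ioi 0, 2 ^ (n + 2) * (x + z) ^ (-(3 / 2) : ℝ) :=
        setIntegral_mono_on (integrableOn_bubbleRemainder n hz).abs
          ((integrableOn_add_rpow_neg_three_halves hz).const_mul _) measurableSet_Ioi
          fun x hx => abs_bubbleRemainder_le n (by linarith [mem_Ioi.mp hx])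
    _ = 2 ^ (n + 3) * z ^ (-(1 / 2) : ℝ) := by
      rw [integral_const_mul, integral_add_rpow_neg_three_halves hz]
      ring

theorem integral_bubbleRemainder (n : ℕ) {z : ℝ} (hz : 0 < z) :
    ∫ x in Ioi 0, bubbleRemainder n z x = polylog (n + 1) (-z) / z := by
  have hderiv : ∀ x ∈ Ici (0 : ℝ), HasDerivAt (fun x => -(polylog (n + 1) (-x - z) / (x + z)))
      (bubbleRemainder n z x) x := by
    intro x hx
    have hxz : 0 < x + z := by linarith [mem_Ici.mp hx]
    have hin : HasDerivAt (fun x : ℝ => -x - z) (-1) x := (hasDerivAt_neg x).sub_const z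
    have hpoly := (hasDerivAt_polylog_succ n (w := -x - z) (by linarith)).comp x hin
    refine ((hpoly.div ((hasDerivAt_id' x).add_const z) hxz.ne').neg).congr_deriv ?_
    rw [bubbleRemainder, Function.comp_apply, ← neg_add', div_neg]
    field_simp
    ring
  have hlim : Tendsto (fun x => -(polylog (n + 1) (-x - z) / (x + z))) atTop (𝓝 0) := by
    have hmajor := (tendsto_add_rpow_neg_half z).const_mul (2 ^ (n + 1))
    rw [mul_zero] at hmajor
    refine squeeze_zero_norm' ?_ hmajor
    filter_upwards [eventually_ge_atTop 0] with x hx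
    have hxz : 0 < x + z := by linarith
    rw [norm_neg, Real.norm_eq_abs, abs_div, abs_of_pos hxz, div_le_iff₀ hxz, ← neg_add',
      Real.rpow_neg hxz.le, ← Real.sqrt_eq_rpow, mul_assoc, ← div_eq_inv_mul, Real.div_sqrt]
    exact abs_polylog_neg_le_sqrt (n + 1) hxz.le
  rw [integral_Ioi_of_hasDerivAt_of_tendsto' hderiv (integrableOn_bubbleRemainder n hz) hlim]
  simp

def BubbleL1Bound (n : ℕ) (C : ℝ) : Prop :=
  ∀ z, 0 < z → IntegrableOn (bubbleIntegrand n z) (Ioi 0) ∧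
    ∫ x in Ioi 0, |bubbleIntegrand n z x| ≤ C * z ^ (1 / 2 : ℝ)

theorem continuousOn_bubbleIntegrandDeriv (n : ℕ) :
    ContinuousOn (fun p : ℝ × ℝ => bubbleIntegrandDeriv n p.1 p.2) (Ioi 0 ×ˢ Ioi 0) :=
  (((continuousOn_bubbleIntegrand n).mono (prod_mono Ioi_subset_Ici_self subset_rfl)).div
    continuousOn_fst fun _ hp => hp.1.ne').add (continuousOn_bubbleRemainder n)

theorem integral_abs_bubbleIntegrandDeriv_le {n : ℕ} {C : ℝ} (hF : BubbleL1Bound n C) {z : ℝ}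
    (hz : 0 < z) :
    ∫ x in Ioi 0, |bubbleIntegrandDeriv n z x| ≤ (C + 2 ^ (n + 3)) * z ^ (-(1 / 2) : ℝ) := by
  obtain ⟨hint, hL1⟩ := hF z hz
  have hR := integrableOn_bubbleRemainder n hz
  calc ∫ x in Ioi 0, |bubbleIntegrandDeriv n z x|
      ≤ ∫ x in Ioi 0, (|bubbleIntegrand n z x| / z + |bubbleRemainder n z x|) := by
        refine setIntegral_mono_on ((hint.div_const z).add hR).abs
          ((hint.abs.div_const z).add hR.abs) measurableSet_Ioi fun x _ => ?_
        rw [← abs_of_pos hz, ← abs_div, abs_of_pos hz]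
        exact abs_add_le _ _
    _ = (∫ x in Ioi 0, |bubbleIntegrand n z x|) / z + ∫ x in Ioi 0, |bubbleRemainder n z x| := by
        rw [integral_add (hint.abs.div_const z) hR.abs, integral_div]
    _ ≤ C * z ^ (1 / 2 : ℝ) / z + 2 ^ (n + 3) * z ^ (-(1 / 2) : ℝ) := by
        gcongr
        exact integral_abs_bubbleRemainder_le n hz
    _ = (C + 2 ^ (n + 3)) * z ^ (-(1 / 2) : ℝ) := by
        rw [mul_div_assoc, ← Real.rpow_sub_one hz.ne']
        norm_num
        ring

theorem integrable_bubbleIntegrandDeriv_prod {n : ℕ} {C : ℝ} (hF : BubbleL1Bound n C) (Z : ℝ) :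
    Integrable (Function.uncurry (bubbleIntegrandDeriv n))
      ((volume.restrict (Ioc 0 Z)).prod (volume.restrict (Ioi 0))) := by
  have hmeas : AEStronglyMeasurable (Function.uncurry (bubbleIntegrandDeriv n))
      ((volume.restrict (Ioc 0 Z)).prod (volume.restrict (Ioi 0))) := by
    rw [Measure.prod_restrict]
    exact ((continuousOn_bubbleIntegrandDeriv n).mono (prod_mono Ioc_subset_Ioi_self subset_rfl))
      |>.aestronglyMeasurable (measurableSet_Ioc.prod measurableSet_Ioi)
  refine (integrable_prod_iff hmeas).2 ⟨?_, ?_⟩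
  · filter_upwards [ae_restrict_mem measurableSet_Ioc] with z hz
    exact ((hF z hz.1).1.div_const z).add (integrableOn_bubbleRemainder n hz.1)
  · refine Integrable.mono' (g := fun z => (C + 2 ^ (n + 3)) * z ^ (-(1 / 2) : ℝ)) ?_
      hmeas.norm.integral_prod_right' ?_
    · exact ((intervalIntegral.intervalIntegrable_rpow' (by norm_num)).const_mul _).1
    · filter_upwards [ae_restrict_mem measurableSet_Ioc] with z hz
      rw [Real.norm_of_nonneg (integral_nonneg fun _ => norm_nonneg _)]
      exact integral_abs_bubbleIntegrandDeriv_le hF hz.1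

theorem bubbleIntegrand_succ_eq_integral {n : ℕ} {Z x : ℝ} (hZ : 0 ≤ Z) (hx : 0 < x)
    (hD : IntegrableOn (fun z => bubbleIntegrandDeriv n z x) (Ioc 0 Z)) :
    bubbleIntegrand (n + 1) Z x = ∫ z in Ioc 0 Z, bubbleIntegrandDeriv n z x := by
  have hcont : ContinuousOn (fun z => bubbleIntegrand (n + 1) z x) (Icc 0 Z) :=
    (continuousOn_bubbleIntegrand (n + 1)).comp (Continuous.prodMk_left x).continuousOn
      fun z hz => ⟨hz.1, hx⟩
  rw [← intervalIntegral.integral_of_le hZ,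
    intervalIntegral.integral_eq_sub_of_hasDeriv_right_of_le hZ hcont
      (fun z hz => (hasDerivAt_bubbleIntegrand_succ n hz.1 hx).hasDerivWithinAt)
      ((intervalIntegrable_iff_integrableOn_Ioc_of_le hZ).2 hD),
    bubbleIntegrand_apply_zero, sub_zero]

theorem ae_bubbleIntegrand_succ_eq_integral {n : ℕ} {C : ℝ} (hF : BubbleL1Bound n C) {Z : ℝ}
    (hZ : 0 ≤ Z) : ∀ᵐ x ∂volume.restrict (Ioi 0),
      bubbleIntegrand (n + 1) Z x = ∫ z in Ioc 0 Z, bubbleIntegrandDeriv n z x := by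
  filter_upwards [ae_restrict_mem measurableSet_Ioi,
    (integrable_bubbleIntegrandDeriv_prod hF Z).prod_left_ae] with x hx hD
  exact bubbleIntegrand_succ_eq_integral hZ hx hD

theorem integral_bubbleIntegrandDeriv {n : ℕ} {z : ℝ} (hz : 0 < z)
    (hint : IntegrableOn (bubbleIntegrand n z) (Ioi 0))
    (hval : ∫ x in Ioi 0, bubbleIntegrand n z x = n * polylog (n + 1) (-z)) :
    ∫ x in Ioi 0, bubbleIntegrandDeriv n z x = (n + 1) * (polylog (n + 1) (-z) / z) := by
  simp only [bubbleIntegrandDeriv]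
  rw [integral_add (hint.div_const z) (integrableOn_bubbleRemainder n hz), integral_div, hval,
    integral_bubbleRemainder n hz]
  ring

theorem BubbleL1Bound.succ {n : ℕ} {C : ℝ} (hF : BubbleL1Bound n C) :
    BubbleL1Bound (n + 1) (2 * (C + 2 ^ (n + 3))) := by
  intro Z hZ
  have hprod := integrable_bubbleIntegrandDeriv_prod hF Z
  have hae := ae_bubbleIntegrand_succ_eq_integral hF hZ.le
  refine ⟨hprod.integral_prod_right.congr (hae.mono fun x hx => hx.symm), ?_⟩
  calc ∫ x in Ioi 0, |bubbleIntegrand (n + 1) Z x|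
      = ∫ x in Ioi 0, |∫ z in Ioc 0 Z, bubbleIntegrandDeriv n z x| :=
        integral_congr_ae (hae.mono fun _ hx => congrArg abs hx)
    _ ≤ ∫ x in Ioi 0, ∫ z in Ioc 0 Z, |bubbleIntegrandDeriv n z x| :=
        integral_mono_of_nonneg (ae_of_all _ fun _ => abs_nonneg _) hprod.norm.integral_prod_right
          (ae_of_all _ fun _ => abs_integral_le_integral_abs)
    _ = ∫ z in Ioc 0 Z, ∫ x in Ioi 0, |bubbleIntegrandDeriv n z x| :=
        (integral_integral_swap hprod.norm).symm
    _ ≤ ∫ z in Ioc 0 Z, (C + 2 ^ (n + 3)) * z ^ (-(1 / 2) : ℝ) := by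
        refine integral_mono_of_nonneg (ae_of_all _ fun _ => integral_nonneg fun _ => abs_nonneg _)
          ((intervalIntegral.intervalIntegrable_rpow' (by norm_num)).const_mul _).1 ?_
        filter_upwards [ae_restrict_mem measurableSet_Ioc] with z hz
        exact integral_abs_bubbleIntegrandDeriv_le hF hz.1
    _ = 2 * (C + 2 ^ (n + 3)) * Z ^ (1 / 2 : ℝ) := by
        rw [← intervalIntegral.integral_of_le hZ.le, intervalIntegral.integral_const_mul,
          integral_rpow (.inl (by norm_num)), Real.zero_rpow (by norm_num)]
        norm_num
        ring

theorem exists_bubbleL1Bound (n : ℕ) : ∃ C, BubbleL1Bound n C := by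
  induction n with
  | zero =>
    refine ⟨0, fun z hz => ⟨integrableOn_zero.congr_fun (bubbleIntegrand_zero_eqOn hz.le).symm
      measurableSet_Ioi, ?_⟩⟩
    rw [setIntegral_congr_fun measurableSet_Ioi fun _ hx =>
      congrArg abs (bubbleIntegrand_zero_eqOn hz.le hx)]
    simp
  | succ n ih =>
    obtain ⟨C, hC⟩ := ih
    exact ⟨_, hC.succ⟩

theorem integral_bubbleIntegrand (n : ℕ) {z : ℝ} (hz : 0 ≤ z) :
    ∫ x in Ioi 0, bubbleIntegrand n z x = n * polylog (n + 1) (-z) := by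
  induction n generalizing z with
  | zero =>
    rw [setIntegral_congr_fun measurableSet_Ioi (bubbleIntegrand_zero_eqOn hz)]
    simp
  | succ n ih =>
    obtain ⟨C, hC⟩ := exists_bubbleL1Bound n
    calc ∫ x in Ioi 0, bubbleIntegrand (n + 1) z x
        = ∫ x in Ioi 0, ∫ y in Ioc 0 z, bubbleIntegrandDeriv n y x :=
          integral_congr_ae (ae_bubbleIntegrand_succ_eq_integral hC hz)
      _ = ∫ y in Ioc 0 z, ∫ x in Ioi 0, bubbleIntegrandDeriv n y x :=
          (integral_integral_swap (integrable_bubbleIntegrandDeriv_prod hC z)).symm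
      _ = ∫ y in Ioc 0 z, (n + 1) * (polylog (n + 1) (-y) / y) :=
          setIntegral_congr_fun measurableSet_Ioc fun y hy =>
            integral_bubbleIntegrandDeriv hy.1 (hC y hy.1).1 (ih hy.1.le)
      _ = (n + 1 : ℕ) * polylog (n + 1 + 1) (-z) := by
          rw [← intervalIntegral.integral_of_le hz, intervalIntegral.integral_const_mul,
            ← polylog_succ_neg]
          push_cast
          rfl

theorem bubble_chain_identity_general (n : ℕ) (z : ℝ) (hz : 0 ≤ z) :
    ∫ x in Set.Ioi (0 : ℝ),
        ((1 / x - 1 / (x + z)) * polylog n (-x - z) -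
          (1 / x) * polylog n (-z / (x + 1))) =
      (n : ℝ) * polylog (n + 1) (-z) :=
  integral_bubbleIntegrand n hz

/-- For every `n ≥ 1` and `z ≥ 0`:
`∫₀^∞ [ (1/x − 1/(x+z))·Liₙ(−x−z) − (1/x)·Liₙ(−z/(x+1)) ] dx = n·Li_{n+1}(−z)`. -/
theorem bubble_chain_identity (n : ℕ) (hn : 1 ≤ n) (z : ℝ) (hz : 0 ≤ z) :
    ∫ x in Set.Ioi (0 : ℝ),
        ((1 / x - 1 / (x + z)) * polylog n (-x - z) -
          (1 / x) * polylog n (-z / (x + 1))) =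
      (n : ℝ) * polylog (n + 1) (-z) :=
  bubble_chain_identity_general n z hz
end
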